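/- Fix T_1 < T_2 and p_1, p_2 > 0 with p_1 + p_2 = 1, and set T_∞ = p_1 T_1 + p_2 T_2. For η > 0 let w_η be the density w associated to the rates η_1 = p_1 η and η_2 = p_2 η. Then for every continuous function φ : [T_1, T_2] → ℝ, lim_{η → 0+} ∫_{T_1}^{T_2} φ(T) w_η(T) dT = φ(T_∞). That is, the measures w_η(T) dT converge weakly to the point mass δ_{T_∞} as η → 0. -/

import Mathlib

open MeasureTheory Filter

/-- The temperature density `w` of Theorem 2.2 (steady state formula). -/
noncomputable def wdens (η₁ η₂ T₁ T₂ : ℝ) (T : ℝ) : ℝ :=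
  if T < (η₁ * T₁ + η₂ * T₂) / (η₁ + η₂) then
    (η₁ / 2) * ((η₁ * T₁ + η₂ * T₂) / (η₁ + η₂) - T₁) ^ (-(η₁ + η₂) / 2) *
      ((η₁ * T₁ + η₂ * T₂) / (η₁ + η₂) - T) ^ ((η₁ + η₂) / 2 - 1)
  else if T = (η₁ * T₁ + η₂ * T₂) / (η₁ + η₂) then 0
  else
    (η₂ / 2) * (T₂ - (η₁ * T₁ + η₂ * T₂) / (η₁ + η₂)) ^ (-(η₁ + η₂) / 2) *
      (T - (η₁ * T₁ + η₂ * T₂) / (η₁ + η₂)) ^ ((η₁ + η₂) / 2 - 1)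

open Set Real intervalIntegral Topology

/-!
With `c = η / 2`, the affine substitution `T = T∞ + (Tᵢ - T∞) s` turns each half of `w_η` into
`pᵢ` times the Beta(c, 1) density `c s^(c-1)` on `[0, 1]`. The substitution `u = s^c` rewrites
`∫₀¹ ψ(s) c s^(c-1) ds` as `∫₀¹ ψ(u^(1/c)) du`, and since `u^(1/c) → 0` for `u ∈ [0, 1)` as
`c → 0⁺`, dominated convergence gives the limit `ψ(0) = φ(T∞)`.
-/

theorem integral_mul_rpow_deriv_eq_integral_comp_rpow_inv (ψ : ℝ → ℝ) {c : ℝ} (hc : 0 < c) :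
    ∫ s in (0:ℝ)..1, ψ s * (c * s ^ (c - 1)) = ∫ u in (0:ℝ)..1, ψ (u ^ c⁻¹) := by
  have himage : (· ^ c) '' Ioo (0:ℝ) 1 = Ioo 0 1 := by
    ext u
    constructor
    · rintro ⟨s, hs, rfl⟩
      exact ⟨rpow_pos_of_pos hs.1 c, rpow_lt_one hs.1.le hs.2 hc⟩
    · intro hu
      exact ⟨u ^ c⁻¹, ⟨rpow_pos_of_pos hu.1 _, rpow_lt_one hu.1.le hu.2 (inv_pos.2 hc)⟩,
        rpow_inv_rpow hu.1.le hc.ne'⟩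
  have hsubst := integral_image_eq_integral_abs_deriv_smul (measurableSet_Ioo (a := 0) (b := 1))
    (fun s hs => (hasDerivAt_rpow_const (p := c) (Or.inl hs.1.ne')).hasDerivWithinAt)
    ((rpow_left_injOn hc.ne').mono fun s hs => mem_Ici.2 hs.1.le) (fun u => ψ (u ^ c⁻¹))
  rw [himage] at hsubst
  rw [integral_of_le zero_le_one, integral_of_le zero_le_one, integral_Ioc_eq_integral_Ioo,
    integral_Ioc_eq_integral_Ioo, hsubst]
  refine setIntegral_congr_fun measurableSet_Ioo fun s hs => ?_
  rw [smul_eq_mul, abs_of_pos (by have := hs.1; positivity), rpow_rpow_inv hs.1.le hc.ne', mul_comm]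

theorem tendsto_integral_comp_rpow_atTop {ψ : ℝ → ℝ} (hψ : ContinuousOn ψ (Icc 0 1)) :
    Tendsto (fun r : ℝ => ∫ u in (0:ℝ)..1, ψ (u ^ r)) atTop (𝓝 (ψ 0)) := by
  obtain ⟨M, hM⟩ := isCompact_Icc.exists_bound_of_continuousOn hψ
  have hmaps : ∀ r : ℝ, 0 < r → MapsTo (fun u : ℝ => u ^ r) (Icc 0 1) (Icc 0 1) := fun r hr u hu =>
    ⟨rpow_nonneg hu.1 r, rpow_le_one hu.1 hu.2 hr.le⟩
  have hlim := tendsto_integral_filter_of_dominated_convergence (μ := volume) (a := 0) (b := 1)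
    (F := fun (r : ℝ) u => ψ (u ^ r)) (f := fun _ => ψ 0) (l := (atTop : Filter ℝ))
    (fun _ => M) ?_ ?_ intervalIntegrable_const ?_
  · simpa using hlim
  · filter_upwards [eventually_gt_atTop 0] with r hr
    have hcont := hψ.comp (continuousOn_id.rpow_const fun _ _ => Or.inr hr.le) (hmaps r hr)
    exact (hcont.mono (uIoc_of_le (zero_le_one' ℝ) ▸ Ioc_subset_Icc_self)).aestronglyMeasurable
      measurableSet_uIoc
  · filter_upwards [eventually_gt_atTop 0] with r hr
    refine Eventually.of_forall fun u hu => hM _ (hmaps r hr ?_)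
    rw [uIoc_of_le zero_le_one] at hu
    exact Ioc_subset_Icc_self hu
  · filter_upwards [volume.ae_ne 1] with u hu1 hu
    rw [uIoc_of_le zero_le_one] at hu
    have hpow : Tendsto (u ^ · : ℝ → ℝ) atTop (𝓝 0) :=
      tendsto_rpow_atTop_of_base_lt_one u (by linarith [hu.1]) (lt_of_le_of_ne hu.2 hu1)
    have hpow' : Tendsto (u ^ · : ℝ → ℝ) atTop (𝓝[Icc 0 1] 0) :=
      tendsto_nhdsWithin_iff.2 ⟨hpow, (eventually_gt_atTop 0).mono fun r hr =>
        hmaps r hr (Ioc_subset_Icc_self hu)⟩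
    exact (hψ 0 (left_mem_Icc.2 zero_le_one)).tendsto.comp hpow'

theorem tendsto_integral_mul_rpow_deriv_nhdsGT_zero {ψ : ℝ → ℝ}
    (hψ : ContinuousOn ψ (Icc 0 1)) :
    Tendsto (fun c : ℝ => ∫ s in (0:ℝ)..1, ψ s * (c * s ^ (c - 1))) (𝓝[>] 0) (𝓝 (ψ 0)) := by
  refine ((tendsto_integral_comp_rpow_atTop hψ).comp tendsto_inv_nhdsGT_zero).congr' ?_
  filter_upwards [self_mem_nhdsWithin] with c hc
  exact (integral_mul_rpow_deriv_eq_integral_comp_rpow_inv ψ hc).symm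

theorem mul_mul_rpow_neg_mul_mul_rpow_sub_one {b s : ℝ} (c : ℝ) (hb : 0 < b) (hs : 0 ≤ s) :
    b * (c * b ^ (-c) * (b * s) ^ (c - 1)) = c * s ^ (c - 1) := by
  calc b * (c * b ^ (-c) * (b * s) ^ (c - 1))
      = c * s ^ (c - 1) * (b ^ (-c) * b ^ (c - 1) * b ^ (1 : ℝ)) := by
        rw [mul_rpow hb.le hs, rpow_one]; ring
    _ = c * s ^ (c - 1) := by
        rw [← rpow_add hb, ← rpow_add hb, show -c + (c - 1) + 1 = 0 by ring, rpow_zero, mul_one]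

theorem integral_mul_rpow_sub_right (φ : ℝ → ℝ) {x y : ℝ} (c : ℝ) (hxy : x < y) :
    ∫ T in x..y, φ T * (c * (y - x) ^ (-c) * (T - x) ^ (c - 1)) =
      ∫ s in (0:ℝ)..1, φ (x + (y - x) * s) * (c * s ^ (c - 1)) := by
  have hb : 0 < y - x := sub_pos.2 hxy
  have hrescale : EqOn
      (fun s => (y - x) *
        (φ (x + (y - x) * s) * (c * (y - x) ^ (-c) * (x + (y - x) * s - x) ^ (c - 1))))
      (fun s => φ (x + (y - x) * s) * (c * s ^ (c - 1))) (uIcc 0 1) := fun s hs => by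
    rw [uIcc_of_le zero_le_one] at hs
    simp only [add_sub_cancel_left]
    rw [mul_left_comm, mul_mul_rpow_neg_mul_mul_rpow_sub_one c hb hs.1]
  rw [← integral_congr hrescale, intervalIntegral.integral_const_mul,
    integral_comp_add_mul (fun T => φ T * (c * (y - x) ^ (-c) * (T - x) ^ (c - 1))) hb.ne',
    smul_eq_mul, mul_inv_cancel_left₀ hb.ne']
  simp

theorem integral_mul_rpow_sub_left (φ : ℝ → ℝ) {x y : ℝ} (c : ℝ) (hyx : y < x) :
    ∫ T in y..x, φ T * (c * (x - y) ^ (-c) * (x - T) ^ (c - 1)) =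
      ∫ s in (0:ℝ)..1, φ (x + (y - x) * s) * (c * s ^ (c - 1)) := by
  have hb : 0 < x - y := sub_pos.2 hyx
  have hrescale : EqOn
      (fun s => (x - y) *
        (φ (x - (x - y) * s) * (c * (x - y) ^ (-c) * (x - (x - (x - y) * s)) ^ (c - 1))))
      (fun s => φ (x + (y - x) * s) * (c * s ^ (c - 1))) (uIcc 0 1) := fun s hs => by
    rw [uIcc_of_le zero_le_one] at hs
    simp only [sub_sub_cancel]
    rw [show x - (x - y) * s = x + (y - x) * s by ring, mul_left_comm, mul_mul_rpow_neg_mul_mul_rpow_sub_one c hb hs.1]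
  rw [← integral_congr hrescale, intervalIntegral.integral_const_mul,
    integral_comp_sub_mul (fun T => φ T * (c * (x - y) ^ (-c) * (x - T) ^ (c - 1))) hb.ne',
    smul_eq_mul, mul_inv_cancel_left₀ hb.ne']
  simp

theorem wdens_mul_eq {p₁ p₂ η T₁ T₂ Tinf : ℝ} (hp : p₁ + p₂ = 1) (hη : η ≠ 0)
    (hTinf : Tinf = p₁ * T₁ + p₂ * T₂) (T : ℝ) :
    wdens (p₁ * η) (p₂ * η) T₁ T₂ T =
      if T < Tinf then p₁ * (η / 2 * (Tinf - T₁) ^ (-(η / 2)) * (Tinf - T) ^ (η / 2 - 1))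
      else if T = Tinf then 0
      else p₂ * (η / 2 * (T₂ - Tinf) ^ (-(η / 2)) * (T - Tinf) ^ (η / 2 - 1)) := by
  have hsum : p₁ * η + p₂ * η = η := by rw [← add_mul, hp, one_mul]
  have hmean : (p₁ * η * T₁ + p₂ * η * T₂) / η = Tinf := by
    rw [hTinf]; field_simp
  simp only [wdens, hsum, hmean, neg_div]
  split_ifs <;> ring

theorem integral_mul_wdens_mul_eq {φ : ℝ → ℝ} {p₁ p₂ η T₁ T₂ Tinf : ℝ} (hp : p₁ + p₂ = 1)
    (hη : 0 < η) (hTinf : Tinf = p₁ * T₁ + p₂ * T₂) (h₁ : T₁ < Tinf) (h₂ : Tinf < T₂)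
    (hφ : ContinuousOn φ (Icc T₁ T₂)) :
    ∫ T in T₁..T₂, φ T * wdens (p₁ * η) (p₂ * η) T₁ T₂ T =
      p₁ * (∫ s in (0:ℝ)..1, φ (Tinf + (T₁ - Tinf) * s) * (η / 2 * s ^ (η / 2 - 1))) +
      p₂ * ∫ s in (0:ℝ)..1, φ (Tinf + (T₂ - Tinf) * s) * (η / 2 * s ^ (η / 2 - 1)) := by
  have hL : EqOn (fun T => φ T * wdens (p₁ * η) (p₂ * η) T₁ T₂ T)
      (fun T => p₁ * (φ T * (η / 2 * (Tinf - T₁) ^ (-(η / 2)) * (Tinf - T) ^ (η / 2 - 1))))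
      (uIoo T₁ Tinf) := fun T hT => by
    rw [uIoo_of_le h₁.le] at hT
    simp only [wdens_mul_eq hp hη.ne' hTinf, if_pos hT.2]
    ring
  have hR : EqOn (fun T => φ T * wdens (p₁ * η) (p₂ * η) T₁ T₂ T)
      (fun T => p₂ * (φ T * (η / 2 * (T₂ - Tinf) ^ (-(η / 2)) * (T - Tinf) ^ (η / 2 - 1))))
      (uIoo Tinf T₂) := fun T hT => by
    rw [uIoo_of_le h₂.le] at hT
    simp only [wdens_mul_eq hp hη.ne' hTinf, if_neg hT.1.not_gt, if_neg hT.1.ne']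
    ring
  have hexp : -1 < η / 2 - 1 := by linarith
  have hsingL : IntervalIntegrable (fun T => (Tinf - T) ^ (η / 2 - 1)) volume T₁ Tinf := by
    simpa using (intervalIntegrable_rpow' hexp (a := Tinf - T₁) (b := 0)).comp_sub_left Tinf
  have hsingR : IntervalIntegrable (fun T => (T - Tinf) ^ (η / 2 - 1)) volume Tinf T₂ := by
    simpa using (intervalIntegrable_rpow' hexp (a := 0) (b := T₂ - Tinf)).comp_sub_right Tinf
  have hintL := ((hsingL.const_mul (η / 2 * (Tinf - T₁) ^ (-(η / 2)))).continuousOn_mul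
    (hφ.mono (uIcc_of_le h₁.le ▸ Icc_subset_Icc_right h₂.le))).const_mul p₁
  have hintR := ((hsingR.const_mul (η / 2 * (T₂ - Tinf) ^ (-(η / 2)))).continuousOn_mul
    (hφ.mono (uIcc_of_le h₂.le ▸ Icc_subset_Icc_left h₁.le))).const_mul p₂
  rw [← integral_add_adjacent_intervals (hintL.congr_uIoo hL.symm) (hintR.congr_uIoo hR.symm),
    integral_congr_uIoo hL, integral_congr_uIoo hR, intervalIntegral.integral_const_mul,
    intervalIntegral.integral_const_mul,
    integral_mul_rpow_sub_left φ _ h₁, integral_mul_rpow_sub_right φ _ h₂]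

theorem ContinuousOn.comp_add_mul_sub_Icc {φ : ℝ → ℝ} {x y : ℝ} (hφ : ContinuousOn φ (uIcc x y)) :
    ContinuousOn (fun s => φ (x + (y - x) * s)) (Icc 0 1) := by
  refine hφ.comp (by fun_prop) fun s hs => ?_
  rcases le_total x y with h | h
  · rw [uIcc_of_le h]; constructor <;> nlinarith [hs.1, hs.2]
  · rw [uIcc_of_ge h]; constructor <;> nlinarith [hs.1, hs.2]

/-- As `η → 0⁺` (with the proportions `p₁, p₂` fixed), the measures `w_η(T) dT`
converge weakly to the point mass `δ_{T∞}` with `T∞ = p₁ T₁ + p₂ T₂`. -/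
theorem wdens_weak_limit_zero
    (T₁ T₂ : ℝ) (hT₁₂ : T₁ < T₂)
    (p₁ p₂ : ℝ) (hp₁ : 0 < p₁) (hp₂ : 0 < p₂) (hp : p₁ + p₂ = 1)
    (Tinf : ℝ) (hTinf : Tinf = p₁ * T₁ + p₂ * T₂)
    (φ : ℝ → ℝ) (hφ : ContinuousOn φ (Set.Icc T₁ T₂)) :
    Tendsto (fun η : ℝ => ∫ T in T₁..T₂, φ T * wdens (p₁ * η) (p₂ * η) T₁ T₂ T)
      (nhdsWithin 0 (Set.Ioi 0)) (nhds (φ Tinf)) := by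
  have h₁ : T₁ < Tinf := by linear_combination mul_pos hp₂ (sub_pos.2 hT₁₂) - hTinf - T₁ * hp
  have h₂ : Tinf < T₂ := by linear_combination mul_pos hp₁ (sub_pos.2 hT₁₂) + hTinf + T₂ * hp
  have hhalf : Tendsto (fun η : ℝ => η / 2) (𝓝[>] 0) (𝓝[>] 0) :=
    tendsto_nhdsWithin_iff.2 ⟨((continuous_id.div_const (2:ℝ)).tendsto' 0 0 (zero_div 2)).mono_left
      nhdsWithin_le_nhds, eventually_mem_nhdsWithin.mono fun η hη => mem_Ioi.2 (half_pos hη)⟩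
  have hside : ∀ y ∈ Icc T₁ T₂, Tendsto
      (fun η : ℝ => ∫ s in (0:ℝ)..1, φ (Tinf + (y - Tinf) * s) * (η / 2 * s ^ (η / 2 - 1)))
      (𝓝[>] 0) (𝓝 (φ Tinf)) := fun y hy => by
    have hcomp := (tendsto_integral_mul_rpow_deriv_nhdsGT_zero
      (hφ.mono (uIcc_subset_Icc ⟨h₁.le, h₂.le⟩ hy)).comp_add_mul_sub_Icc).comp hhalf
    rwa [mul_zero, add_zero] at hcomp
  have hlim := ((hside T₁ (left_mem_Icc.2 hT₁₂.le)).const_mul p₁).add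
    ((hside T₂ (right_mem_Icc.2 hT₁₂.le)).const_mul p₂)
  rw [← add_mul, hp, one_mul] at hlim
  refine hlim.congr' ?_
  filter_upwards [self_mem_nhdsWithin] with η hη
  exact (integral_mul_wdens_mul_eq hp hη hTinf h₁ h₂ hφ).symm
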